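/- Let β, ε, γ, μ > 0, let λ, ν : [0,T] → ℝ be continuous with λ(t) ∈ [0,1] and ν(t) ≥ 0 for all t, and let s, e, i : [0,T] → ℝ be differentiable functions satisfying on [0,T] the reduced SEIR system with temporary immunity: s' = -β(1-λ(t)) s i - ν(t) s + μ(1 - s - e - i), e' = β(1-λ(t)) s i - ε e, i' = ε e - γ i. If s(0), e(0), i(0) ≥ 0 and s(0) + e(0) + i(0) ≤ 1, then for all t ∈ [0,T] one has s(t), e(t), i(t) ≥ 0 and s(t) + e(t) + i(t) ≤ 1; that is, the set { (s,e,i) : s, e, i ≥ 0, s + e + i ≤ 1 } is positively invariant. -/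

import Mathlib

/-!
The penalty `V = s⁻² + e⁻² + i⁻² + ((s + e + i - 1)⁺)²` vanishes exactly on the simplex and,
since `x ↦ (x⁺)²` is `C¹`, is differentiable along solutions. On the compact interval `[0, T]`
the functions `s`, `i`, `ν` are bounded by some `M`, and then every term of `V'` is controlled by
`V` itself, giving `V' ≤ K V`. Grönwall's inequality with `V(0) = 0` forces `V ≡ 0`.
-/

open Set Filter Asymptotics

lemma abs_posPart_sq_sub_sub_le (x y : ℝ) :
    |y⁺ ^ 2 - x⁺ ^ 2 - 2 * x⁺ * (y - x)| ≤ (y - x) ^ 2 := by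
  rw [abs_le]
  rcases le_total 0 x with hx | hx <;> rcases le_total 0 y with hy | hy <;>
    simp only [posPart_of_nonneg, posPart_of_nonpos, hx, hy] <;>
    constructor <;> nlinarith

lemma hasDerivAt_posPart_sq (x : ℝ) : HasDerivAt (fun y : ℝ => y⁺ ^ 2) (2 * x⁺) x := by
  rw [hasDerivAt_iff_isLittleO]
  refine IsBigO.trans_isLittleO ?_ (isLittleO_pow_sub_sub x one_lt_two)
  refine IsBigO.of_bound 1 (Eventually.of_forall fun y => ?_)
  simpa [Real.norm_eq_abs, sq_abs, mul_comm] using abs_posPart_sq_sub_sub_le x y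

lemma HasDerivAt.posPart_sq {f : ℝ → ℝ} {f' x : ℝ} (hf : HasDerivAt f f' x) :
    HasDerivAt (fun y => (f y)⁺ ^ 2) (2 * (f x)⁺ * f') x :=
  (hasDerivAt_posPart_sq (f x)).comp x hf

lemma HasDerivAt.negPart_sq {f : ℝ → ℝ} {f' x : ℝ} (hf : HasDerivAt f f' x) :
    HasDerivAt (fun y => (f y)⁻ ^ 2) (-2 * (f x)⁻ * f') x := by
  simpa only [Pi.neg_apply, posPart_neg, mul_neg, neg_mul] using hf.neg.posPart_sq

lemma nonpos_of_deriv_right_le_mul_self {v v' : ℝ → ℝ} {K a b : ℝ}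
    (hv : ContinuousOn v (Icc a b)) (hv' : ∀ t ∈ Ico a b, HasDerivWithinAt v (v' t) (Ici t) t)
    (bound : ∀ t ∈ Ico a b, v' t ≤ K * v t) (ha : v a ≤ 0) :
    ∀ t ∈ Icc a b, v t ≤ 0 := fun t ht => by
  simpa only [gronwallBound_ε0_δ0] using
    le_gronwallBound_of_liminf_deriv_right_le (K := K) (ε := 0) hv
      (fun x hx _ hr => (hv' x hx).liminf_right_slope_le hr) ha
      (by simpa only [add_zero] using bound) t ht

lemma neg_mul_le_mul_negPart_add {x y M : ℝ} (hx : |x| ≤ M) (hy : |y| ≤ M) :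
    -(x * y) ≤ M * (x⁻ + y⁻) := by
  rw [abs_le] at hx hy
  rcases le_total 0 x with hx0 | hx0 <;> rcases le_total 0 y with hy0 | hy0 <;>
    simp only [negPart_of_nonneg, negPart_of_nonpos, hx0, hy0] <;> nlinarith

lemma negPart_mul_self (x : ℝ) : x⁻ * x = -x⁻ ^ 2 := by
  rcases le_total 0 x with hx | hx <;> simp [negPart_of_nonneg, negPart_of_nonpos, hx, sq]

lemma posPart_mul_self (x : ℝ) : x⁺ * x = x⁺ ^ 2 := by
  rcases le_total 0 x with hx | hx <;> simp [posPart_of_nonneg, posPart_of_nonpos, hx, sq]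

def seirPenalty (S E I : ℝ) : ℝ := S⁻ ^ 2 + E⁻ ^ 2 + I⁻ ^ 2 + (S + E + I - 1)⁺ ^ 2

lemma seirPenalty_nonpos_iff {S E I : ℝ} :
    seirPenalty S E I ≤ 0 ↔ 0 ≤ S ∧ 0 ≤ E ∧ 0 ≤ I ∧ S + E + I ≤ 1 := by
  constructor
  · intro h
    have hS := sq_nonneg S⁻
    have hE := sq_nonneg E⁻
    have hI := sq_nonneg I⁻
    have hw := sq_nonneg (S + E + I - 1)⁺
    unfold seirPenalty at h
    refine ⟨?_, ?_, ?_, ?_⟩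
    · exact negPart_eq_zero.mp (pow_eq_zero_iff two_ne_zero |>.mp (by linarith))
    · exact negPart_eq_zero.mp (pow_eq_zero_iff two_ne_zero |>.mp (by linarith))
    · exact negPart_eq_zero.mp (pow_eq_zero_iff two_ne_zero |>.mp (by linarith))
    · exact sub_nonpos.mp (posPart_eq_zero.mp (pow_eq_zero_iff two_ne_zero |>.mp (by linarith)))
  · rintro ⟨hS, hE, hI, hsum⟩
    simp [seirPenalty, negPart_of_nonneg, posPart_of_nonpos, hS, hE, hI, hsum]

lemma HasDerivAt.seirPenalty {s e i : ℝ → ℝ} {s' e' i' t : ℝ} (hs : HasDerivAt s s' t)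
    (he : HasDerivAt e e' t) (hi : HasDerivAt i i' t) :
    HasDerivAt (fun t => seirPenalty (s t) (e t) (i t))
      (-2 * (s t)⁻ * s' + -2 * (e t)⁻ * e' + -2 * (i t)⁻ * i'
        + 2 * (s t + e t + i t - 1)⁺ * (s' + e' + i')) t :=
  ((hs.negPart_sq.add he.negPart_sq).add hi.negPart_sq).add
    (((hs.add he).add hi).sub_const 1).posPart_sq

section Slope

variable {β ε γ μ σ n M S E I S' E' I' : ℝ}

lemma seir_s_slope_le (hβ : 0 ≤ β) (hμ : 0 ≤ μ) (hσ : σ ∈ Icc (0 : ℝ) 1)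
    (hn : 0 ≤ n) (hI : |I| ≤ M) :
    -2 * S⁻ * (-β * σ * S * I - n * S + μ * (1 - S - E - I))
      ≤ 2 * β * M * S⁻ ^ 2 + μ * (S⁻ ^ 2 + (S + E + I - 1)⁺ ^ 2) := by
  obtain ⟨hσ0, hσ1⟩ := hσ
  obtain ⟨hI1, hI2⟩ := abs_le.mp hI
  have hσI : -(σ * I) ≤ M := by nlinarith
  have hS := negPart_nonneg S
  have hw := le_posPart (S + E + I - 1)
  have : -2 * S⁻ * (-β * σ * S * I - n * S + μ * (1 - S - E - I))
      = 2 * β * (-(σ * I)) * S⁻ ^ 2 - 2 * n * S⁻ ^ 2 + 2 * μ * S⁻ * (S + E + I - 1) := by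
    linear_combination (2 * β * σ * I + 2 * n) * negPart_mul_self S
  rw [this]
  linarith [mul_le_mul_of_nonneg_left hσI (mul_nonneg hβ (sq_nonneg S⁻)),
    mul_nonneg hμ (sq_nonneg (S⁻ - (S + E + I - 1)⁺)),
    mul_le_mul_of_nonneg_left hw (mul_nonneg hμ hS), mul_nonneg hn (sq_nonneg S⁻)]

lemma seir_e_slope_le (hβ : 0 ≤ β) (hε : 0 ≤ ε) (hσ : σ ∈ Icc (0 : ℝ) 1)
    (hS : |S| ≤ M) (hI : |I| ≤ M) :
    -2 * E⁻ * (β * σ * S * I - ε * E) ≤ β * M * (S⁻ ^ 2 + 2 * E⁻ ^ 2 + I⁻ ^ 2) := by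
  obtain ⟨hσ0, hσ1⟩ := hσ
  have hM : 0 ≤ M := (abs_nonneg S).trans hS
  have hE := negPart_nonneg E
  have hSI : -(S * I) ≤ M * (S⁻ + I⁻) := neg_mul_le_mul_negPart_add hS hI
  have hMSI : 0 ≤ E⁻ * (M * (S⁻ + I⁻)) := by positivity
  have : -2 * E⁻ * (β * σ * S * I - ε * E)
      = 2 * β * σ * E⁻ * (-(S * I)) - 2 * ε * E⁻ ^ 2 := by
    linear_combination 2 * ε * negPart_mul_self E
  rw [this]
  linarith [mul_le_mul_of_nonneg_left hSI (by positivity : 0 ≤ 2 * β * σ * E⁻),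
    mul_le_mul_of_nonneg_right hσ1 (mul_nonneg hβ hMSI), mul_nonneg hε (sq_nonneg E⁻),
    mul_nonneg (mul_nonneg hβ hM) (sq_nonneg (S⁻ - E⁻)),
    mul_nonneg (mul_nonneg hβ hM) (sq_nonneg (E⁻ - I⁻))]

lemma seir_i_slope_le (hε : 0 ≤ ε) (hγ : 0 ≤ γ) :
    -2 * I⁻ * (ε * E - γ * I) ≤ ε * (E⁻ ^ 2 + I⁻ ^ 2) := by
  have : -2 * I⁻ * (ε * E - γ * I) = -2 * ε * I⁻ * E - 2 * γ * I⁻ ^ 2 := by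
    linear_combination 2 * γ * negPart_mul_self I
  rw [this]
  linarith [mul_le_mul_of_nonneg_left (neg_le_negPart E) (mul_nonneg hε (negPart_nonneg I)),
    mul_nonneg hε (sq_nonneg (E⁻ - I⁻)), mul_nonneg hγ (sq_nonneg I⁻)]

lemma seir_total_slope_le (hμ : 0 ≤ μ) (hγ : 0 ≤ γ) (hn : n ∈ Icc 0 M) :
    2 * (S + E + I - 1)⁺ * (-n * S - μ * (S + E + I - 1) - γ * I)
      ≤ M * (S⁻ ^ 2 + (S + E + I - 1)⁺ ^ 2) + γ * (I⁻ ^ 2 + (S + E + I - 1)⁺ ^ 2) := by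
  obtain ⟨hn0, hnM⟩ := hn
  set w := (S + E + I - 1)⁺
  have hw : 0 ≤ w := posPart_nonneg _
  have : 2 * w * (-n * S - μ * (S + E + I - 1) - γ * I)
      = -2 * n * w * S - 2 * μ * w ^ 2 - 2 * γ * w * I := by
    linear_combination -2 * μ * posPart_mul_self (S + E + I - 1)
  rw [this]
  linarith [mul_le_mul_of_nonneg_left (neg_le_negPart S) (mul_nonneg hn0 hw),
    mul_le_mul_of_nonneg_right hnM (mul_nonneg hw (negPart_nonneg S)),
    mul_le_mul_of_nonneg_left (neg_le_negPart I) (mul_nonneg hγ hw),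
    mul_nonneg (hn0.trans hnM) (sq_nonneg (S⁻ - w)), mul_nonneg hγ (sq_nonneg (I⁻ - w)),
    mul_nonneg hμ (sq_nonneg w)]

lemma seirPenalty_slope_le (hβ : 0 ≤ β) (hε : 0 ≤ ε) (hγ : 0 ≤ γ) (hμ : 0 ≤ μ)
    (hσ : σ ∈ Icc (0 : ℝ) 1) (hn : n ∈ Icc 0 M) (hS : |S| ≤ M) (hI : |I| ≤ M)
    (hS' : S' = -β * σ * S * I - n * S + μ * (1 - S - E - I))
    (hE' : E' = β * σ * S * I - ε * E) (hI' : I' = ε * E - γ * I) :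
    -2 * S⁻ * S' + -2 * E⁻ * E' + -2 * I⁻ * I' + 2 * (S + E + I - 1)⁺ * (S' + E' + I')
      ≤ (3 * β * M + μ + ε + γ + M) * seirPenalty S E I := by
  have hM : 0 ≤ M := (abs_nonneg S).trans hS
  have htotal : S' + E' + I' = -n * S - μ * (S + E + I - 1) - γ * I := by
    rw [hS', hE', hI']; ring
  rw [htotal, seirPenalty, hS', hE', hI']
  linarith [seir_s_slope_le (S := S) (E := E) hβ hμ hσ hn.1 hI,
    seir_e_slope_le (E := E) hβ hε hσ hS hI, seir_i_slope_le (E := E) (I := I) hε hγ,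
    seir_total_slope_le (S := S) (E := E) (I := I) hμ hγ hn,
    mul_nonneg (add_nonneg hε hγ) (sq_nonneg S⁻),
    mul_nonneg (by positivity : 0 ≤ β * M + μ + γ + M) (sq_nonneg E⁻),
    mul_nonneg (by positivity : 0 ≤ 2 * β * M + μ + M) (sq_nonneg I⁻),
    mul_nonneg (by positivity : 0 ≤ 3 * β * M + ε) (sq_nonneg (S + E + I - 1)⁺)]

end Slope

theorem temporary_immunity_positively_invariant_general
    (T : ℝ) (β ε γ μ : ℝ) (hβ : 0 < β) (hε : 0 < ε) (hγ : 0 < γ) (hμ : 0 < μ)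
    (lam nu : ℝ → ℝ)
    (hnu : ContinuousOn nu (Set.Icc 0 T))
    (hlam01 : ∀ t ∈ Set.Icc (0 : ℝ) T, lam t ∈ Set.Icc (0 : ℝ) 1)
    (hnu0 : ∀ t ∈ Set.Icc (0 : ℝ) T, 0 ≤ nu t)
    (s e i : ℝ → ℝ)
    (hs : ∀ t ∈ Set.Icc (0 : ℝ) T,
      HasDerivAt s (-β * (1 - lam t) * s t * i t - nu t * s t
        + μ * (1 - s t - e t - i t)) t)
    (he : ∀ t ∈ Set.Icc (0 : ℝ) T,
      HasDerivAt e (β * (1 - lam t) * s t * i t - ε * e t) t)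
    (hi : ∀ t ∈ Set.Icc (0 : ℝ) T, HasDerivAt i (ε * e t - γ * i t) t)
    (hs0 : 0 ≤ s 0) (he0 : 0 ≤ e 0) (hi0 : 0 ≤ i 0)
    (hsum0 : s 0 + e 0 + i 0 ≤ 1) :
    ∀ t ∈ Set.Icc (0 : ℝ) T,
      0 ≤ s t ∧ 0 ≤ e t ∧ 0 ≤ i t ∧ s t + e t + i t ≤ 1 := by
  have hcont : ∀ {f f' : ℝ → ℝ}, (∀ t ∈ Icc 0 T, HasDerivAt f (f' t) t) →
      ContinuousOn f (Icc 0 T) := fun hf t ht => (hf t ht).continuousAt.continuousWithinAt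
  obtain ⟨M, hM⟩ : ∃ M, ∀ t ∈ Icc 0 T, |s t| ≤ M ∧ |i t| ≤ M ∧ nu t ≤ M := by
    obtain ⟨M, hM⟩ := isCompact_Icc.exists_bound_of_continuousOn
      (f := fun t => |s t| + |i t| + |nu t|) (((hcont hs).abs.add (hcont hi).abs).add hnu.abs)
    refine ⟨M, fun t ht => ?_⟩
    have := (le_abs_self _).trans (hM t ht)
    have := le_abs_self (nu t)
    refine ⟨?_, ?_, ?_⟩ <;> linarith [abs_nonneg (s t), abs_nonneg (i t), abs_nonneg (nu t)]
  have hpenalty : ∀ t ∈ Icc 0 T, HasDerivAt (fun t => seirPenalty (s t) (e t) (i t)) _ t :=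
    fun t ht => (hs t ht).seirPenalty (he t ht) (hi t ht)
  intro t ht
  refine seirPenalty_nonpos_iff.mp (nonpos_of_deriv_right_le_mul_self
    (K := 3 * β * M + μ + ε + γ + M) (hcont hpenalty)
    (fun t ht => (hpenalty t (Ico_subset_Icc_self ht)).hasDerivWithinAt) (fun t ht => ?_)
    (seirPenalty_nonpos_iff.mpr ⟨hs0, he0, hi0, hsum0⟩) t ht)
  obtain ⟨hlam0, hlam1⟩ := hlam01 t (Ico_subset_Icc_self ht)
  obtain ⟨hsM, hiM, hnuM⟩ := hM t (Ico_subset_Icc_self ht)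
  exact seirPenalty_slope_le (σ := 1 - lam t) (M := M) hβ.le hε.le hγ.le hμ.le
    ⟨by linarith, by linarith⟩ ⟨hnu0 t (Ico_subset_Icc_self ht), hnuM⟩ hsM hiM rfl rfl rfl

/-- **Positive invariance for the reduced SEIR model with temporary immunity.**
For `β, ε, γ, μ > 0`, continuous controls `lam, nu` on `[0,T]` with
`λ(t) ∈ [0,1]` and `ν(t) ≥ 0`, and `s, e, i` solving the reduced SEIR system
with temporary immunity on `[0,T]`, if `s(0), e(0), i(0) ≥ 0` with
`s(0) + e(0) + i(0) ≤ 1`, then `s(t), e(t), i(t) ≥ 0` and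
`s(t) + e(t) + i(t) ≤ 1` on all of `[0,T]`: the set
`{(s,e,i) : s, e, i ≥ 0, s + e + i ≤ 1}` is positively invariant. -/
theorem temporary_immunity_positively_invariant
    (T : ℝ) (β ε γ μ : ℝ) (hβ : 0 < β) (hε : 0 < ε) (hγ : 0 < γ) (hμ : 0 < μ)
    (lam nu : ℝ → ℝ)
    (hlam : ContinuousOn lam (Set.Icc 0 T)) (hnu : ContinuousOn nu (Set.Icc 0 T))
    (hlam01 : ∀ t ∈ Set.Icc (0 : ℝ) T, lam t ∈ Set.Icc (0 : ℝ) 1)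
    (hnu0 : ∀ t ∈ Set.Icc (0 : ℝ) T, 0 ≤ nu t)
    (s e i : ℝ → ℝ)
    (hs : ∀ t ∈ Set.Icc (0 : ℝ) T,
      HasDerivAt s (-β * (1 - lam t) * s t * i t - nu t * s t
        + μ * (1 - s t - e t - i t)) t)
    (he : ∀ t ∈ Set.Icc (0 : ℝ) T,
      HasDerivAt e (β * (1 - lam t) * s t * i t - ε * e t) t)
    (hi : ∀ t ∈ Set.Icc (0 : ℝ) T, HasDerivAt i (ε * e t - γ * i t) t)
    (hs0 : 0 ≤ s 0) (he0 : 0 ≤ e 0) (hi0 : 0 ≤ i 0)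
    (hsum0 : s 0 + e 0 + i 0 ≤ 1) :
    ∀ t ∈ Set.Icc (0 : ℝ) T,
      0 ≤ s t ∧ 0 ≤ e t ∧ 0 ≤ i t ∧ s t + e t + i t ≤ 1 :=
  temporary_immunity_positively_invariant_general T β ε γ μ hβ hε hγ hμ lam nu hnu hlam01 hnu0 s e i
    hs he hi hs0 he0 hi0 hsum0
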